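/- arXiv:1609.04611 — 6 statements merged into one kernel-verified Lean document; each statement's English description precedes it below -/
import Mathlib

section
/- If f : ℝ → ℝ is continuous, f(t)/|t| is non-decreasing on (0,∞) and on (-∞,0), f(t) = o(t) as t → 0, and f(u) ≠ 0 for some u, then F(u) < (1/2) f(u) u, where F(u) = ∫₀ᵘ f(s) ds. -/
/-! If `f s / s ≤ c := f u / u` on `(0, u]` and `f t / t → 0` at `0⁺`, then `c ≥ 0`, so `c > 0`
as `f u ≠ 0`; hence `f s < c s` close to `0`, and integrating `f s ≤ c s` gives
`∫₀ᵘ f < c u² / 2 = f u · u / 2`. The case `u < 0` is the case `u > 0` for `t ↦ -f (-t)`. -/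

open Filter Topology Set

theorem eq_zero_of_tendsto_div_self {f : ℝ → ℝ} (hf : ContinuousAt f 0)
    (hsmall : Tendsto (fun t => f t / t) (𝓝[≠] 0) (𝓝 0)) : f 0 = 0 := by
  have hprod : Tendsto (fun t => f t / t * t) (𝓝[≠] 0) (𝓝 (0 * 0)) :=
    hsmall.mul (tendsto_nhdsWithin_of_tendsto_nhds tendsto_id)
  have hlim : Tendsto f (𝓝[≠] 0) (𝓝 0) := by
    rw [mul_zero] at hprod
    exact hprod.congr' (eventually_nhdsWithin_of_forall fun t ht => div_mul_cancel₀ (f t) ht)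
  exact tendsto_nhds_unique (hf.tendsto.mono_left nhdsWithin_le_nhds) hlim

theorem integral_lt_half_mul_self_of_pos {f : ℝ → ℝ} {u : ℝ} (hu : 0 < u)
    (hf : ContinuousOn f (Icc 0 u)) (hslope : ∀ s ∈ Ioc 0 u, f s / s ≤ f u / u)
    (hsmall : Tendsto (fun t => f t / t) (𝓝[>] 0) (𝓝 0)) (hfu : f u ≠ 0) :
    ∫ s in (0 : ℝ)..u, f s < 1 / 2 * f u * u := by
  set c := f u / u
  have hc_nonneg : 0 ≤ c := le_of_tendsto hsmall (mem_of_superset (Ioc_mem_nhdsGT hu) hslope)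
  have hc_pos : 0 < c := hc_nonneg.lt_of_ne' (div_ne_zero hfu hu.ne')
  obtain ⟨t, ht_lt, ht_mem⟩ :=
    ((hsmall.eventually (eventually_lt_nhds hc_pos)).and (Ioc_mem_nhdsGT hu)).exists
  calc ∫ s in (0 : ℝ)..u, f s < ∫ s in (0 : ℝ)..u, c * s :=
        intervalIntegral.integral_lt_integral_of_continuousOn_of_le_of_exists_lt hu hf
          (continuous_const_mul c).continuousOn
          (fun s hs => (div_le_iff₀ hs.1).1 (hslope s hs))
          ⟨t, Ioc_subset_Icc_self ht_mem, (div_lt_iff₀ ht_mem.1).1 ht_lt⟩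
    _ = 1 / 2 * f u * u := by
      rw [intervalIntegral.integral_const_mul, integral_id]
      simp only [c]
      field_simp
      ring

theorem integral_lt_half_mul_self_of_neg {f : ℝ → ℝ} {u : ℝ} (hu : u < 0)
    (hf : ContinuousOn f (Icc u 0)) (hslope : ∀ s ∈ Ico u 0, f u / |u| ≤ f s / |s|)
    (hsmall : Tendsto (fun t => f t / t) (𝓝[<] 0) (𝓝 0)) (hfu : f u ≠ 0) :
    ∫ s in (0 : ℝ)..u, f s < 1 / 2 * f u * u := by
  have hreflect := integral_lt_half_mul_self_of_pos (f := fun t => -f (-t)) (neg_pos.2 hu)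
    (hf.comp continuous_neg.continuousOn fun s hs => ⟨by linarith [hs.2], by linarith [hs.1]⟩).neg
    (fun s hs => by
      have h := hslope (-s) ⟨by linarith [hs.2], by linarith [hs.1]⟩
      rw [abs_of_neg hu, abs_of_neg (neg_neg_of_pos hs.1)] at h
      simp only [neg_neg, neg_div, div_neg] at h ⊢
      linarith)
    ((hsmall.comp (neg_zero (G := ℝ) ▸ tendsto_neg_nhdsGT_neg)).congr fun t => by
      simp [div_neg, neg_div])
    (by simpa using hfu)
  rw [intervalIntegral.integral_neg, intervalIntegral.integral_comp_neg, neg_neg, neg_zero,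
    intervalIntegral.integral_symm] at hreflect
  linarith

theorem stmt_0 (f : ℝ → ℝ) (hf : Continuous f)
    (hmono_pos : ∀ s t : ℝ, 0 < s → s ≤ t → f s / s ≤ f t / t)
    (hmono_neg : ∀ s t : ℝ, s ≤ t → t < 0 → f s / |s| ≤ f t / |t|)
    (hsmall : Tendsto (fun t => f t / t) (nhdsWithin 0 {(0:ℝ)}ᶜ) (nhds 0))
    (u : ℝ) (hu : f u ≠ 0) :
    (∫ s in (0:ℝ)..u, f s) < (1/2) * f u * u := by
  rcases lt_trichotomy u 0 with hneg | rfl | hpos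
  · exact integral_lt_half_mul_self_of_neg hneg hf.continuousOn
      (fun s hs => hmono_neg u s hs.1 hs.2)
      (hsmall.mono_left (nhdsWithin_mono _ fun t ht => ht.ne)) hu
  · exact absurd (eq_zero_of_tendsto_div_self hf.continuousAt hsmall) hu
  · exact integral_lt_half_mul_self_of_pos hpos hf.continuousOn
      (fun s hs => hmono_pos s u hs.1 hs.2)
      (hsmall.mono_left (nhdsWithin_mono _ fun t ht => ht.ne')) hu
end

section
/- For u > 0 with f(u) ≠ 0 and any s ≥ 0, v ∈ ℝ, the quantity g(s,v) := f(u)[(1/2)(s² − 1)u + s v] + F(u) − F(su + v) satisfies g(s,v) ≤ 0. -/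
open Filter

theorem stmt_2 (f : ℝ → ℝ) (hf : Continuous f)
    (hmono_pos : ∀ s t : ℝ, 0 < s → s ≤ t → f s / s ≤ f t / t)
    (hmono_neg : ∀ s t : ℝ, s ≤ t → t < 0 → f s / |s| ≤ f t / |t|)
    (hsmall : Tendsto (fun t => f t / t) (nhdsWithin 0 {(0:ℝ)}ᶜ) (nhds 0))
    (hsuper : Tendsto (fun t => (∫ r in (0:ℝ)..t, f r) / t ^ 2) (cocompact ℝ) atTop)
    (u : ℝ) (hu : 0 < u) (hfu : f u ≠ 0) :
    ∀ s v : ℝ, 0 ≤ s →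
      f u * ((1/2) * (s ^ 2 - 1) * u + s * v) + (∫ r in (0:ℝ)..u, f r)
        - (∫ r in (0:ℝ)..(s * u + v), f r) ≤ 0 := by
  have hint : ∀ a b : ℝ, IntervalIntegrable f MeasureTheory.volume a b :=
    fun a b => hf.intervalIntegrable a b
  set c : ℝ := f u / u with hc
  have hfu_eq : f u = c * u := by rw [hc, div_mul_cancel₀ _ hu.ne']
  have hc0 : 0 ≤ c := by
    have hlim : Tendsto (fun t => f t / t) (nhdsWithin 0 (Set.Ioi 0)) (nhds 0) :=
      hsmall.mono_left (nhdsWithin_mono 0 fun x hx => ne_of_gt hx)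
    refine le_of_tendsto hlim ?_
    filter_upwards [Ioc_mem_nhdsGT_of_mem ⟨le_refl (0:ℝ), hu⟩] with t ht
    exact hmono_pos t u ht.1 ht.2
  have hcpos : 0 < c := by
    rcases hc0.lt_or_eq with h | h
    · exact h
    · exact absurd (by rw [hfu_eq, ← h]; ring) hfu
  have hf0 : f 0 = 0 := by
    have h1 : Tendsto f (nhdsWithin (0:ℝ) {(0:ℝ)}ᶜ) (nhds 0) := by
      have h2 := hsmall.mul (tendsto_id.mono_left (nhdsWithin_le_nhds (s := {(0:ℝ)}ᶜ)))
      rw [mul_zero] at h2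
      refine h2.congr' ?_
      filter_upwards [self_mem_nhdsWithin] with t ht
      have ht' : t ≠ 0 := ht
      simp only [id_eq]
      field_simp
    have h2 : Tendsto f (nhdsWithin (0:ℝ) {(0:ℝ)}ᶜ) (nhds (f 0)) :=
      (hf.tendsto 0).mono_left nhdsWithin_le_nhds
    exact tendsto_nhds_unique h2 h1
  have hfneg : ∀ t : ℝ, t ≤ 0 → f t ≤ 0 := by
    intro t ht
    rcases ht.lt_or_eq with h | h
    · have hlim : Tendsto (fun r : ℝ => -(f r / r)) (nhdsWithin 0 (Set.Iio 0)) (nhds 0) := by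
        have := (hsmall.mono_left (nhdsWithin_mono 0 fun x hx => ne_of_lt hx)).neg
        rwa [neg_zero] at this
      have hle : f t / |t| ≤ 0 := by
        refine ge_of_tendsto hlim ?_
        filter_upwards [Ico_mem_nhdsLT_of_mem ⟨h, le_refl (0:ℝ)⟩] with r hr
        have h1 := hmono_neg t r hr.1 hr.2
        rw [abs_of_neg hr.2, div_neg] at h1
        exact h1
      have habs : (0:ℝ) < |t| := abs_pos.mpr (ne_of_lt h)
      have := (div_nonpos_iff.mp hle)
      rcases this with ⟨h1, h2⟩ | ⟨h1, h2⟩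
      · exact absurd (lt_of_lt_of_le habs h2) (lt_irrefl 0)
      · exact h1
    · rw [h, hf0]
  have hflow : ∀ t ∈ Set.Icc (0:ℝ) u, f t ≤ c * t := by
    rintro t ⟨h0, h1⟩
    rcases h0.lt_or_eq with h | h
    · have := hmono_pos t u h h1
      rw [div_le_iff₀ h] at this
      linarith [this]
    · rw [← h, hf0]; simp
  have hfhigh : ∀ x : ℝ, ∀ t ∈ Set.Icc u x, c * t ≤ f t := by
    rintro x t ⟨h0, _⟩
    have ht : 0 < t := lt_of_lt_of_le hu h0
    have := hmono_pos u t hu h0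
    rw [le_div_iff₀ ht] at this
    exact this
  have hcint : ∀ a b : ℝ, IntervalIntegrable (fun t : ℝ => c * t) MeasureTheory.volume a b :=
    fun a b => (continuous_const.mul continuous_id).intervalIntegrable a b
  have hFU : (∫ r in (0:ℝ)..u, f r) ≤ c * u ^ 2 / 2 := by
    have hm := intervalIntegral.integral_mono_on hu.le (hint 0 u) (hcint 0 u) hflow
    have hid : (∫ t in (0:ℝ)..u, c * t) = c * u ^ 2 / 2 := by
      rw [intervalIntegral.integral_const_mul, integral_id]
      ring
    simpa [hid] using hm
  intro s v hs
  by_cases hw : 0 < s * u + v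
  · -- positive case
    have hsplit : (∫ r in (0:ℝ)..(s*u+v), f r) + (∫ r in (s*u+v)..u, f r)
        = ∫ r in (0:ℝ)..u, f r :=
      intervalIntegral.integral_add_adjacent_intervals (hint 0 (s*u+v)) (hint (s*u+v) u)
    have key : (∫ r in (0:ℝ)..u, f r) - (∫ r in (0:ℝ)..(s*u+v), f r)
        ≤ c * (u ^ 2 - (s*u+v) ^ 2) / 2 := by
      have heq : (∫ r in (0:ℝ)..u, f r) - (∫ r in (0:ℝ)..(s*u+v), f r)
          = ∫ r in (s*u+v)..u, f r := by linarith [hsplit]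
      rw [heq]
      rcases le_total (s*u+v) u with hle | hle
      · have hm := intervalIntegral.integral_mono_on hle (hint (s*u+v) u)
          (hcint _ _)
          (fun t ht => hflow t ⟨le_trans hw.le ht.1, ht.2⟩)
        have hid : (∫ t in (s*u+v)..u, c * t) = c * (u ^ 2 - (s*u+v) ^ 2) / 2 := by
          rw [intervalIntegral.integral_const_mul, integral_id]
          ring
        linarith [hm, hid.le, hid.ge]
      · have hm := intervalIntegral.integral_mono_on hle
          (hcint _ _)
          (hint u (s*u+v)) (hfhigh (s*u+v))
        have hid : (∫ t in u..(s*u+v), c * t) = c * ((s*u+v) ^ 2 - u ^ 2) / 2 := by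
          rw [intervalIntegral.integral_const_mul, integral_id]
          ring
        rw [intervalIntegral.integral_symm]
        nlinarith [hm, hid]
    rw [hfu_eq]
    nlinarith [key, mul_nonneg hc0 (sq_nonneg v)]
  · -- nonpositive case
    push_neg at hw
    have hFw : 0 ≤ ∫ r in (0:ℝ)..(s*u+v), f r := by
      rw [intervalIntegral.integral_symm]
      have hm := intervalIntegral.integral_mono_on hw (hint (s*u+v) 0)
        (intervalIntegrable_const (c := (0:ℝ)))
        (fun t ht => hfneg t ht.2)
      simpa using hm
    have hprod : c * u * s * (s*u+v) ≤ 0 :=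
      mul_nonpos_of_nonneg_of_nonpos (by positivity) hw
    rw [hfu_eq]
    nlinarith [hFU, hFw, hprod, mul_nonneg hc0 (sq_nonneg (s*u)), hcpos.le, hu.le, sq_nonneg (s*u)]
end

section
/- With g as above, g(s,v) → −∞ as s + |v| → ∞ (with s ≥ 0); more precisely, there exist A > 0 and C such that g(s,v) ≤ −(1/2)s² f(u)u + s f(u)(su+v) − A(su+v)² + C for all s ≥ 0, v ∈ ℝ, and the quadratic form (s,z) ↦ −(1/2)s² f(u)u + s f(u) z − A z² is negative definite for A sufficiently large. -/
/-!
Writing `a = f u * u` and `z = s u + v`, the difference of the two sides of the bound is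
`(A z² - F z) - C + (F u - a / 2)`, so the bound amounts to `A z² - F z` being bounded above,
which holds for every `A` because `F` is continuous and superquadratic. The sign `a > 0` comes from
the monotonicity of `f t / |t|` together with `f t / t → 0`. With `A = f u / u`, completing the
square gives `2 a Q(s, z) = -((a s - f u z)² + f u² z²)`, so the quadratic form `Q` is negative definite.
-/

open Filter Topology

section Sign

variable {f : ℝ → ℝ}

lemma apply_zero_eq_zero_of_tendsto_div (hf : Continuous f)
    (hsmall : Tendsto (fun t => f t / t) (𝓝[≠] 0) (𝓝 0)) : f 0 = 0 := by
  have hlim : Tendsto (fun t => f t / t * t) (𝓝[≠] 0) (𝓝 0) := by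
    simpa using hsmall.mul (tendsto_id.mono_left nhdsWithin_le_nhds)
  refine tendsto_nhds_unique ((hf.tendsto 0).mono_left nhdsWithin_le_nhds) (hlim.congr' ?_)
  filter_upwards [self_mem_nhdsWithin] with t ht
  exact div_mul_cancel₀ (f t) ht

lemma apply_pos_of_pos (hmono_pos : ∀ s t : ℝ, 0 < s → s ≤ t → f s / s ≤ f t / t)
    (hsmall : Tendsto (fun t => f t / t) (𝓝[≠] 0) (𝓝 0)) {u : ℝ} (hu : 0 < u) (hfu : f u ≠ 0) :
    0 < f u := by
  have hdiv : 0 ≤ f u / u := by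
    refine le_of_tendsto (hsmall.mono_left (nhdsGT_le_nhdsNE 0)) ?_
    filter_upwards [Ioo_mem_nhdsGT hu] with t ht
    exact hmono_pos t u ht.1 ht.2.le
  exact lt_of_le_of_ne (by simpa using (le_div_iff₀ hu).1 hdiv) hfu.symm

lemma apply_neg_of_neg (hmono_neg : ∀ s t : ℝ, s ≤ t → t < 0 → f s / |s| ≤ f t / |t|)
    (hsmall : Tendsto (fun t => f t / t) (𝓝[≠] 0) (𝓝 0)) {u : ℝ} (hu : u < 0) (hfu : f u ≠ 0) :
    f u < 0 := by
  have hdiv : f u / |u| ≤ 0 := by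
    have hlim : Tendsto (fun t => -(f t / t)) (𝓝[<] 0) (𝓝 0) := by
      simpa using (hsmall.mono_left (nhdsLT_le_nhdsNE 0)).neg
    refine ge_of_tendsto hlim ?_
    filter_upwards [Ioo_mem_nhdsLT hu] with t ht
    simpa [abs_of_neg ht.2, div_neg] using hmono_neg u t ht.1.le ht.2
  rw [abs_of_neg hu] at hdiv
  exact lt_of_le_of_ne (by simpa using (div_le_iff₀ (neg_pos.2 hu)).1 hdiv) hfu

lemma apply_mul_pos_of_apply_ne_zero (hf : Continuous f)
    (hmono_pos : ∀ s t : ℝ, 0 < s → s ≤ t → f s / s ≤ f t / t)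
    (hmono_neg : ∀ s t : ℝ, s ≤ t → t < 0 → f s / |s| ≤ f t / |t|)
    (hsmall : Tendsto (fun t => f t / t) (𝓝[≠] 0) (𝓝 0)) {u : ℝ} (hfu : f u ≠ 0) :
    0 < f u * u := by
  rcases lt_trichotomy u 0 with hu | rfl | hu
  · exact mul_pos_of_neg_of_neg (apply_neg_of_neg hmono_neg hsmall hu hfu) hu
  · exact absurd (apply_zero_eq_zero_of_tendsto_div hf hsmall) hfu
  · exact mul_pos (apply_pos_of_pos hmono_pos hsmall hu hfu) hu

end Sign

lemma exists_forall_mul_sq_sub_le {F : ℝ → ℝ} (hF : Continuous F)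
    (hsuper : Tendsto (fun t => F t / t ^ 2) (cocompact ℝ) atTop) (A : ℝ) :
    ∃ M, ∀ z, A * z ^ 2 - F z ≤ M := by
  have hsq : Tendsto (fun z : ℝ => -z ^ 2) (cocompact ℝ) atBot :=
    (tendsto_neg_atTop_atBot.comp ((tendsto_pow_atTop two_ne_zero).comp
      (tendsto_norm_cocompact_atTop (E := ℝ)))).congr fun z => by simp
  have hlim : Tendsto (fun z => A * z ^ 2 - F z) (cocompact ℝ) atBot := by
    refine tendsto_atBot_mono' _ ?_ hsq
    filter_upwards [hsuper.eventually_ge_atTop (A + 1),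
      (hasBasis_cocompact.eventually_iff).2 ⟨{0}, isCompact_singleton, fun z hz => hz⟩]
      with z hz hz0
    have hz2 : 0 < z ^ 2 := sq_pos_of_ne_zero hz0
    nlinarith [(le_div_iff₀ hz2).1 hz]
  obtain ⟨x, hx⟩ := ((continuous_const.mul (continuous_pow 2)).sub hF).exists_forall_ge hlim
  exact ⟨_, hx⟩

lemma quadratic_form_neg_of_sq_lt {a b A s z : ℝ} (ha : 0 < a) (hA : b ^ 2 < 2 * a * A)
    (hsz : (s, z) ≠ (0, 0)) : -(1/2) * s ^ 2 * a + s * b * z - A * z ^ 2 < 0 := by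
  have hsum : 0 < (a * s - b * z) ^ 2 + (2 * a * A - b ^ 2) * z ^ 2 := by
    rcases eq_or_ne z 0 with rfl | hz
    · have hs : s ≠ 0 := fun hs => hsz (by rw [hs])
      simpa using sq_pos_of_ne_zero (mul_ne_zero ha.ne' hs)
    · nlinarith [sq_nonneg (a * s - b * z), sq_pos_of_ne_zero hz]
  nlinarith

theorem stmt_3 (f : ℝ → ℝ) (hf : Continuous f)
    (hmono_pos : ∀ s t : ℝ, 0 < s → s ≤ t → f s / s ≤ f t / t)
    (hmono_neg : ∀ s t : ℝ, s ≤ t → t < 0 → f s / |s| ≤ f t / |t|)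
    (hsmall : Tendsto (fun t => f t / t) (nhdsWithin 0 {(0:ℝ)}ᶜ) (nhds 0))
    (hsuper : Tendsto (fun t => (∫ r in (0:ℝ)..t, f r) / t ^ 2) (cocompact ℝ) atTop)
    (u : ℝ) (hfu : f u ≠ 0) :
    ∃ A > (0:ℝ), ∃ C : ℝ,
      (∀ s v : ℝ, 0 ≤ s →
        f u * ((1/2) * (s ^ 2 - 1) * u + s * v) + (∫ r in (0:ℝ)..u, f r)
          - (∫ r in (0:ℝ)..(s * u + v), f r)
        ≤ -(1/2) * s ^ 2 * (f u * u) + s * f u * (s * u + v) - A * (s * u + v) ^ 2 + C) ∧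
      (∀ s z : ℝ, (s, z) ≠ (0, 0) →
        -(1/2) * s ^ 2 * (f u * u) + s * f u * z - A * z ^ 2 < 0) := by
  have ha : 0 < f u * u := apply_mul_pos_of_apply_ne_zero hf hmono_pos hmono_neg hsmall hfu
  have hu : u ≠ 0 := by rintro rfl; simp at ha
  have hA : 0 < f u / u := by
    have hdiv : f u / u = f u * u / u ^ 2 := by field_simp
    exact hdiv ▸ div_pos ha (sq_pos_of_ne_zero hu)
  obtain ⟨M, hM⟩ := exists_forall_mul_sq_sub_le
    (intervalIntegral.continuous_primitive (fun a b => hf.intervalIntegrable a b) 0) hsuper (f u / u)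
  refine ⟨f u / u, hA, M + (∫ r in (0:ℝ)..u, f r) - f u * u / 2, fun s v _ => ?_,
    fun s z hsz => quadratic_form_neg_of_sq_lt ha ?_ hsz⟩
  · linear_combination hM (s * u + v)
  · have h2aA : 2 * (f u * u) * (f u / u) = 2 * f u ^ 2 := by field_simp
    rw [h2aA]
    nlinarith [sq_pos_of_ne_zero hfu]
end

section
/- There exist s_u ∈ (0,1] and t_u ≥ 1 such that for s ≥ 0 and v ∈ ℝ, g(s,v) = 0 if and only if s ∈ [s_u, t_u] and v = 0; moreover f(su) = s f(u) for every s ∈ [s_u, t_u]. -/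
open Filter

set_option maxHeartbeats 1600000 in
private theorem stmt_6_pos (f : ℝ → ℝ) (hf : Continuous f)
    (hmono_pos : ∀ s t : ℝ, 0 < s → s ≤ t → f s / s ≤ f t / t)
    (hsmall : Tendsto (fun t => f t / t) (nhdsWithin 0 {(0:ℝ)}ᶜ) (nhds 0))
    (hsuper : Tendsto (fun t => (∫ r in (0:ℝ)..t, f r) / t ^ 2) (cocompact ℝ) atTop)
    (hneg : ∀ t : ℝ, t ≤ 0 → f t ≤ 0)
    (u : ℝ) (hu : 0 < u) (hfu : f u ≠ 0) :
    ∃ su tu : ℝ, 0 < su ∧ su ≤ 1 ∧ 1 ≤ tu ∧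
      (∀ s v : ℝ, 0 ≤ s →
        (f u * ((1/2) * (s ^ 2 - 1) * u + s * v) + (∫ r in (0:ℝ)..u, f r)
          - (∫ r in (0:ℝ)..(s * u + v), f r) = 0 ↔ s ∈ Set.Icc su tu ∧ v = 0)) ∧
      (∀ s ∈ Set.Icc su tu, f (s * u) = s * f u) := by
  have hInt : ∀ p q : ℝ, IntervalIntegrable f MeasureTheory.volume p q :=
    fun p q => hf.intervalIntegrable p q
  set c := f u / u with hc_def
  have hsmall' : Tendsto (fun s => f s / s) (nhdsWithin 0 (Set.Ioi 0)) (nhds 0) :=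
    hsmall.mono_left (nhdsWithin_mono _ fun x hx => ne_of_gt hx)
  -- nonnegativity of f t / t for positive t
  have hnn : ∀ t : ℝ, 0 < t → 0 ≤ f t / t := by
    intro t ht
    refine le_of_tendsto hsmall' ?_
    filter_upwards [Ioo_mem_nhdsGT_of_mem (Set.mem_Ico.2 ⟨le_refl 0, ht⟩)] with s hs'
    exact hmono_pos s t hs'.1 hs'.2.le
  have hcpos : 0 < c := lt_of_le_of_ne (hnn u hu) (Ne.symm (div_ne_zero hfu hu.ne'))
  have hfu' : f u = c * u := by rw [hc_def, div_mul_cancel₀ _ hu.ne']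
  -- monotonicity lower bound above u
  have hfge : ∀ t, u ≤ t → c * t ≤ f t := by
    intro t ht
    have ht0 : 0 < t := lt_of_lt_of_le hu ht
    have h2 : f u / u * t ≤ f t / t * t :=
      mul_le_mul_of_nonneg_right (hmono_pos u t hu ht) ht0.le
    rwa [div_mul_cancel₀ _ ht0.ne'] at h2
  -- existence of a point where f t > c t
  have hex : ∃ t₀, u < t₀ ∧ c * t₀ < f t₀ := by
    by_contra h
    push_neg at h
    have hfc : ∀ x, u ≤ x → f x ≤ c * x := by
      intro x hx
      rcases eq_or_lt_of_le hx with he | hl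
      · rw [← he, hfu']
      · exact h x hl
    have hbound : ∀ t, u ≤ t →
        (∫ r in (0:ℝ)..t, f r) ≤ (∫ r in (0:ℝ)..u, f r) + c * t ^ 2 / 2 := by
      intro t ht
      have h1 : (∫ r in (0:ℝ)..t, f r) - (∫ r in (0:ℝ)..u, f r) = ∫ r in u..t, f r :=
        intervalIntegral.integral_interval_sub_left (hInt 0 t) (hInt 0 u)
      have h2 : (∫ r in u..t, f r) ≤ ∫ r in u..t, c * r := by
        refine intervalIntegral.integral_mono_on ht (hInt u t)
          ((continuous_const.mul continuous_id').intervalIntegrable u t) ?_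
        intro x hx
        exact hfc x hx.1
      have h3 : (∫ r in u..t, c * r) = c * (t ^ 2 - u ^ 2) / 2 := by
        rw [intervalIntegral.integral_const_mul, integral_id]; ring
      nlinarith [sq_nonneg u]
    have hTop : Tendsto (fun t => (∫ r in (0:ℝ)..t, f r) / t ^ 2) atTop atTop := by
      refine hsuper.mono_left ?_
      rw [cocompact_eq_atBot_atTop]
      exact le_sup_right
    obtain ⟨t, ht1, ht2⟩ :=
      ((hTop.eventually_ge_atTop (|∫ r in (0:ℝ)..u, f r| + c / 2 + 1)).and
        (eventually_ge_atTop (max u 1))).exists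
    have hu' : u ≤ t := le_trans (le_max_left _ _) ht2
    have h1' : (1:ℝ) ≤ t := le_trans (le_max_right _ _) ht2
    have hb := hbound t hu'
    have ht0 : (0:ℝ) < t ^ 2 := by positivity
    rw [le_div_iff₀ ht0] at ht1
    have h4 : (1:ℝ) ≤ t ^ 2 := by nlinarith
    have h5 := mul_le_mul_of_nonneg_left h4 (abs_nonneg (∫ r in (0:ℝ)..u, f r))
    have ht1' : |∫ r in (0:ℝ)..u, f r| * t ^ 2 + (c / 2) * t ^ 2 + t ^ 2
        ≤ ∫ r in (0:ℝ)..t, f r := by linear_combination ht1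
    have h6 := le_abs_self (∫ r in (0:ℝ)..u, f r)
    linarith
  obtain ⟨t₀, ht₀u, ht₀⟩ := hex
  have ht₀0 : 0 < t₀ := hu.trans ht₀u
  -- the upper endpoint b
  set S : Set ℝ := Set.Ici u ∩ {t | f t ≤ c * t} with hS_def
  have hSclosed : IsClosed S :=
    isClosed_Ici.inter (isClosed_le hf (continuous_const.mul continuous_id'))
  have hSne : u ∈ S := ⟨le_refl u, by simp [hfu']⟩
  have hSbdd : BddAbove S := by
    refine ⟨t₀, fun t ht => ?_⟩
    by_contra hlt
    push_neg at hlt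
    have h1 := hmono_pos t₀ t ht₀0 hlt.le
    have ht0 : 0 < t := ht₀0.trans hlt
    have h2 : f t / t ≤ c := (div_le_iff₀ ht0).2 ht.2
    have h3 : c < f t₀ / t₀ := (lt_div_iff₀ ht₀0).2 ht₀
    linarith
  set b := sSup S with hb_def
  have hbS : b ∈ S := hSclosed.csSup_mem ⟨u, hSne⟩ hSbdd
  have hub : u ≤ b := hbS.1
  have hb0 : 0 < b := hu.trans_le hub
  -- linearity on [u, b]
  have key1 : ∀ t ∈ Set.Icc u b, f t = c * t := by
    rintro t ⟨ht1, ht2⟩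
    have ht0 : 0 < t := lt_of_lt_of_le hu ht1
    have hge : c * t ≤ f t := hfge t ht1
    have hle : f t ≤ c * t := by
      rcases eq_or_lt_of_le ht2 with he | hl
      · rw [he]; exact hbS.2
      · obtain ⟨t', ht'S, htt'⟩ := exists_lt_of_lt_csSup ⟨u, hSne⟩ hl
        have ht'0 : 0 < t' := lt_of_lt_of_le hu ht'S.1
        have h1 := hmono_pos t t' ht0 htt'.le
        have h2 : f t' / t' ≤ c := (div_le_iff₀ ht'0).2 ht'S.2
        have h3 : f t / t * t ≤ c * t := mul_le_mul_of_nonneg_right (le_trans h1 h2) ht0.le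
        rwa [div_mul_cancel₀ _ ht0.ne'] at h3
    linarith
  -- strict superlinearity after b
  have hgt : ∀ t, b < t → c * t < f t := by
    intro t ht
    have hut : u ≤ t := le_trans hub ht.le
    by_contra h
    push_neg at h
    exact absurd (le_csSup hSbdd ⟨hut, h⟩) (not_le.2 ht)
  -- small-ness near zero : below c t near zero
  have hδ : ∃ δ : ℝ, 0 < δ ∧ δ ≤ u ∧ ∀ t, 0 < t → t < δ → f t < c * t := by
    have hev : ∀ᶠ t in nhdsWithin 0 (Set.Ioi 0), f t / t < c :=
      hsmall'.eventually_lt_const hcpos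
    rw [eventually_nhdsWithin_iff, Metric.eventually_nhds_iff] at hev
    obtain ⟨δ₀, hδ₀, hball⟩ := hev
    refine ⟨min δ₀ u, lt_min hδ₀ hu, min_le_right _ _, ?_⟩
    intro t ht htδ
    have h1 : dist t 0 < δ₀ := by
      rw [Real.dist_eq, sub_zero, abs_of_pos ht]
      exact lt_of_lt_of_le htδ (min_le_left _ _)
    have h2 : f t / t < c := hball h1 ht
    have h3 : f t / t * t < c * t := mul_lt_mul_of_pos_right h2 ht
    rwa [div_mul_cancel₀ _ ht.ne'] at h3
  obtain ⟨δ, hδ0, hδu, hδ⟩ := hδ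
  -- the lower endpoint a
  set T : Set ℝ := Set.Icc δ u ∩ {t | c * t ≤ f t} with hT_def
  have hTclosed : IsClosed T :=
    isClosed_Icc.inter (isClosed_le (continuous_const.mul continuous_id') hf)
  have hTne : u ∈ T := ⟨⟨hδu, le_refl u⟩, by simp [hfu']⟩
  have hTbdd : BddBelow T := ⟨δ, fun t ht => ht.1.1⟩
  set a := sInf T with ha_def
  have haT : a ∈ T := hTclosed.csInf_mem ⟨u, hTne⟩ hTbdd
  have hδa : δ ≤ a := haT.1.1
  have hau : a ≤ u := haT.1.2
  have ha0 : 0 < a := hδ0.trans_le hδa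
  -- linearity on [a, u]
  have key2 : ∀ t ∈ Set.Icc a u, f t = c * t := by
    rintro t ⟨ht1, ht2⟩
    have ht0 : 0 < t := ha0.trans_le ht1
    have hle : f t ≤ c * t := by
      have h1 := hmono_pos t u ht0 ht2
      have h3 : f t / t * t ≤ c * t :=
        mul_le_mul_of_nonneg_right (by rw [hc_def]; exact h1) ht0.le
      rwa [div_mul_cancel₀ _ ht0.ne'] at h3
    have hge : c * t ≤ f t := by
      rcases eq_or_lt_of_le ht1 with he | hl
      · rw [← he]; exact haT.2
      · obtain ⟨t', ht'T, htt'⟩ := exists_lt_of_csInf_lt ⟨u, hTne⟩ hl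
        have ht'0 : 0 < t' := hδ0.trans_le ht'T.1.1
        have h1 := hmono_pos t' t ht'0 htt'.le
        have h2 : c ≤ f t' / t' := (le_div_iff₀ ht'0).2 ht'T.2
        have h3 : c * t ≤ f t / t * t := mul_le_mul_of_nonneg_right (le_trans h2 h1) ht0.le
        rwa [div_mul_cancel₀ _ ht0.ne'] at h3
    linarith
  -- strict sublinearity before a
  have hlt : ∀ t, 0 < t → t < a → f t < c * t := by
    intro t ht hta
    by_cases h : t < δ
    · exact hδ t ht h
    · push_neg at h
      by_contra hc2
      push_neg at hc2
      have : t ∈ T := ⟨⟨h, le_trans hta.le hau⟩, hc2⟩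
      exact absurd (csInf_le hTbdd this) (not_le.2 hta)
  -- combined linearity
  have key : ∀ t ∈ Set.Icc a b, f t = c * t := by
    rintro t ⟨ht1, ht2⟩
    rcases le_total t u with h | h
    · exact key2 t ⟨ht1, h⟩
    · exact key1 t ⟨h, ht2⟩
  -- Ψ vanishes on [a,b]
  have hΨzero : ∀ w ∈ Set.Icc a b,
      (∫ r in (0:ℝ)..u, f r) - (∫ r in (0:ℝ)..w, f r) + c * (w ^ 2 - u ^ 2) / 2 = 0 := by
    intro w hw
    have h1 : (∫ r in (0:ℝ)..w, f r) - (∫ r in (0:ℝ)..u, f r) = ∫ r in u..w, f r :=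
      intervalIntegral.integral_interval_sub_left (hInt 0 w) (hInt 0 u)
    have h2 : (∫ r in u..w, f r) = ∫ r in u..w, c * r := by
      refine intervalIntegral.integral_congr ?_
      intro x hx
      have hsub : Set.uIcc u w ⊆ Set.Icc a b :=
        Set.uIcc_subset_Icc ⟨hau, hub⟩ hw
      exact key x (hsub hx)
    have h3 : (∫ r in u..w, c * r) = c * (w ^ 2 - u ^ 2) / 2 := by
      rw [intervalIntegral.integral_const_mul, integral_id]; ring
    linarith [h1, h2.symm ▸ h3]
  -- Ψ strictly negative on [0, a)
  have hΨneg1 : ∀ w, 0 ≤ w → w < a →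
      (∫ r in (0:ℝ)..u, f r) - (∫ r in (0:ℝ)..w, f r) + c * (w ^ 2 - u ^ 2) / 2 < 0 := by
    intro w hw0 hwa
    have hΨa := hΨzero a ⟨le_refl a, hub.trans' hau⟩
    have h1 : (∫ r in (0:ℝ)..a, f r) - (∫ r in (0:ℝ)..w, f r) = ∫ r in w..a, f r :=
      intervalIntegral.integral_interval_sub_left (hInt 0 a) (hInt 0 w)
    have hpos : 0 < ∫ r in w..a, (c * r - f r) := by
      refine intervalIntegral.intervalIntegral_pos_of_pos_on
        (((continuous_const.mul continuous_id').sub hf).intervalIntegrable w a) ?_ hwa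
      intro x hx
      have hx0 : 0 < x := lt_of_le_of_lt hw0 hx.1
      linarith [hlt x hx0 hx.2]
    have h2 : (∫ r in w..a, (c * r - f r)) = c * (a ^ 2 - w ^ 2) / 2 - ∫ r in w..a, f r := by
      rw [intervalIntegral.integral_sub (f := fun r => c * r)
        ((continuous_const.mul continuous_id').intervalIntegrable w a) (hInt w a)]
      rw [intervalIntegral.integral_const_mul, integral_id]; ring
    nlinarith [hΨa, h1, hpos, h2]
  -- Ψ strictly negative after b
  have hΨneg2 : ∀ w, b < w →
      (∫ r in (0:ℝ)..u, f r) - (∫ r in (0:ℝ)..w, f r) + c * (w ^ 2 - u ^ 2) / 2 < 0 := by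
    intro w hbw
    have hΨb := hΨzero b ⟨hau.trans hub, le_refl b⟩
    have h1 : (∫ r in (0:ℝ)..w, f r) - (∫ r in (0:ℝ)..b, f r) = ∫ r in b..w, f r :=
      intervalIntegral.integral_interval_sub_left (hInt 0 w) (hInt 0 b)
    have hpos : 0 < ∫ r in b..w, (f r - c * r) := by
      refine intervalIntegral.intervalIntegral_pos_of_pos_on
        ((hf.sub (continuous_const.mul continuous_id')).intervalIntegrable b w) ?_ hbw
      intro x hx
      linarith [hgt x hx.1]
    have h2 : (∫ r in b..w, (f r - c * r)) = (∫ r in b..w, f r) - c * (w ^ 2 - b ^ 2) / 2 := by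
      rw [intervalIntegral.integral_sub (g := fun r => c * r) (hInt b w)
        ((continuous_const.mul continuous_id').intervalIntegrable b w)]
      rw [intervalIntegral.integral_const_mul, integral_id]; ring
    nlinarith [hΨb, h1, hpos, h2]
  -- F nonnegative on negatives
  have hFneg : ∀ w : ℝ, w ≤ 0 → 0 ≤ ∫ r in (0:ℝ)..w, f r := by
    intro w hw
    rw [intervalIntegral.integral_symm]
    have h1 : (∫ r in w..(0:ℝ), f r) ≤ ∫ r in w..(0:ℝ), (0:ℝ) := by
      refine intervalIntegral.integral_mono_on hw (hInt w 0)
        (intervalIntegrable_const) ?_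
      intro x hx
      exact hneg x hx.2
    simp only [intervalIntegral.integral_zero] at h1
    linarith
  refine ⟨a / u, b / u, div_pos ha0 hu, (div_le_one hu).2 hau, (one_le_div hu).2 hub, ?_, ?_⟩
  · intro s v hs
    constructor
    · intro h
      rw [hfu'] at h
      have h' : (∫ r in (0:ℝ)..u, f r) - (∫ r in (0:ℝ)..(s * u + v), f r)
          + c * ((s * u + v) ^ 2 - u ^ 2) / 2 - c * v ^ 2 / 2 = 0 := by
        linear_combination h
      by_cases hw : 0 ≤ s * u + v
      · -- Ψ(w) ≤ 0 with equality iff w ∈ [a,b]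
        have hΨle : (∫ r in (0:ℝ)..u, f r) - (∫ r in (0:ℝ)..(s * u + v), f r)
            + c * ((s * u + v) ^ 2 - u ^ 2) / 2 ≤ 0 := by
          rcases lt_or_ge (s * u + v) a with hlt' | hge'
          · exact (hΨneg1 _ hw hlt').le
          · rcases le_or_gt (s * u + v) b with hle' | hgt'
            · exact le_of_eq (hΨzero _ ⟨hge', hle'⟩)
            · exact (hΨneg2 _ hgt').le
        have hv : v = 0 := by
          by_contra hv
          have h1 : 0 < c * v ^ 2 / 2 := by positivity
          linarith
        subst hv
        simp only [add_zero] at h' hΨle ⊢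
        have hΨeq : (∫ r in (0:ℝ)..u, f r) - (∫ r in (0:ℝ)..(s * u), f r)
            + c * ((s * u) ^ 2 - u ^ 2) / 2 = 0 := by linarith
        have hmem : s * u ∈ Set.Icc a b := by
          rcases lt_or_ge (s * u) a with hlt' | hge'
          · exact absurd hΨeq (ne_of_lt (hΨneg1 _ (by positivity) hlt'))
          · rcases le_or_gt (s * u) b with hle' | hgt'
            · exact ⟨hge', hle'⟩
            · exact absurd hΨeq (ne_of_lt (hΨneg2 _ hgt'))
        exact ⟨⟨(div_le_iff₀ hu).2 (by linarith [hmem.1]),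
          (le_div_iff₀ hu).2 (by linarith [hmem.2])⟩, trivial⟩
      · push_neg at hw
        exfalso
        have hsu : 0 ≤ s * u := mul_nonneg hs hu.le
        have hvw : v ≤ s * u + v := by linarith
        have hw2 : (s * u + v) ^ 2 ≤ v ^ 2 := by nlinarith
        have hF : 0 ≤ ∫ r in (0:ℝ)..(s * u + v), f r := hFneg _ hw.le
        have hΨ0 : (∫ r in (0:ℝ)..u, f r) - (∫ r in (0:ℝ)..(0:ℝ), f r)
            + c * ((0:ℝ) ^ 2 - u ^ 2) / 2 < 0 := hΨneg1 0 (le_refl 0) ha0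
        rw [intervalIntegral.integral_same] at hΨ0
        have hcw : c * (s * u + v) ^ 2 ≤ c * v ^ 2 :=
          mul_le_mul_of_nonneg_left hw2 hcpos.le
        linarith
    · rintro ⟨⟨hs1, hs2⟩, rfl⟩
      have hmem : s * u ∈ Set.Icc a b :=
        ⟨(div_le_iff₀ hu).1 hs1, (le_div_iff₀ hu).1 hs2⟩
      have hΨ := hΨzero (s * u) hmem
      rw [hfu']
      simp only [mul_zero, add_zero]
      linear_combination hΨ
  · intro s hsmem
    have hmem : s * u ∈ Set.Icc a b :=
      ⟨(div_le_iff₀ hu).1 hsmem.1, (le_div_iff₀ hu).1 hsmem.2⟩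
    rw [key (s * u) hmem, hfu']
    ring

set_option maxHeartbeats 1600000 in
theorem stmt_6 (f : ℝ → ℝ) (hf : Continuous f)
    (hmono_pos : ∀ s t : ℝ, 0 < s → s ≤ t → f s / s ≤ f t / t)
    (hmono_neg : ∀ s t : ℝ, s ≤ t → t < 0 → f s / |s| ≤ f t / |t|)
    (hsmall : Tendsto (fun t => f t / t) (nhdsWithin 0 {(0:ℝ)}ᶜ) (nhds 0))
    (hsuper : Tendsto (fun t => (∫ r in (0:ℝ)..t, f r) / t ^ 2) (cocompact ℝ) atTop)
    (u : ℝ) (hfu : f u ≠ 0) :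
    ∃ su tu : ℝ, 0 < su ∧ su ≤ 1 ∧ 1 ≤ tu ∧
      (∀ s v : ℝ, 0 ≤ s →
        (f u * ((1/2) * (s ^ 2 - 1) * u + s * v) + (∫ r in (0:ℝ)..u, f r)
          - (∫ r in (0:ℝ)..(s * u + v), f r) = 0 ↔ s ∈ Set.Icc su tu ∧ v = 0)) ∧
      (∀ s ∈ Set.Icc su tu, f (s * u) = s * f u) := by
  -- f 0 = 0
  have hf0 : f 0 = 0 := by
    have h1 : Tendsto f (nhdsWithin 0 {(0:ℝ)}ᶜ) (nhds (f 0)) :=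
      (hf.tendsto 0).mono_left nhdsWithin_le_nhds
    have h3 : Tendsto (fun t : ℝ => f t / t * t) (nhdsWithin 0 {(0:ℝ)}ᶜ) (nhds 0) := by
      have := hsmall.mul ((continuous_id.tendsto (0:ℝ)).mono_left nhdsWithin_le_nhds)
      simpa using this
    have heq : (fun t : ℝ => f t / t * t) =ᶠ[nhdsWithin 0 {(0:ℝ)}ᶜ] f := by
      filter_upwards [self_mem_nhdsWithin] with t ht
      exact div_mul_cancel₀ (f t) ht
    exact tendsto_nhds_unique h1 (h3.congr' heq)
  -- nonnegativity on positives
  have hnonneg : ∀ t : ℝ, 0 ≤ t → 0 ≤ f t := by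
    intro t ht
    rcases eq_or_lt_of_le ht with he | ht
    · rw [← he, hf0]
    have hsmall' : Tendsto (fun s => f s / s) (nhdsWithin 0 (Set.Ioi 0)) (nhds 0) :=
      hsmall.mono_left (nhdsWithin_mono _ fun x hx => ne_of_gt hx)
    have h1 : 0 ≤ f t / t := by
      refine le_of_tendsto hsmall' ?_
      filter_upwards [Ioo_mem_nhdsGT_of_mem (Set.mem_Ico.2 ⟨le_refl 0, ht⟩)] with s hs'
      exact hmono_pos s t hs'.1 hs'.2.le
    have h2 := mul_le_mul_of_nonneg_right h1 ht.le
    rwa [zero_mul, div_mul_cancel₀ _ ht.ne'] at h2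
  -- nonpositivity on negatives
  have hnonpos : ∀ t : ℝ, t ≤ 0 → f t ≤ 0 := by
    intro t ht
    rcases eq_or_lt_of_le ht with he | ht
    · rw [he, hf0]
    have hsmall' : Tendsto (fun s : ℝ => -(f s / s)) (nhdsWithin 0 (Set.Iio 0)) (nhds 0) := by
      have := (hsmall.mono_left (nhdsWithin_mono _ fun x (hx : x ∈ Set.Iio (0:ℝ)) => ne_of_lt hx)).neg
      simpa only [neg_zero] using this
    have h1 : f t / |t| ≤ 0 := by
      refine ge_of_tendsto hsmall' ?_
      filter_upwards [Ioo_mem_nhdsLT_of_mem (Set.mem_Ioc.2 ⟨ht, le_refl 0⟩)] with s hs'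
      have h2 := hmono_neg t s hs'.1.le hs'.2
      rwa [abs_of_neg hs'.2, div_neg] at h2
    have ht' : (0:ℝ) < |t| := abs_pos.2 ht.ne
    have h2 := mul_le_mul_of_nonneg_right h1 ht'.le
    rwa [zero_mul, div_mul_cancel₀ _ ht'.ne'] at h2
  rcases lt_trichotomy u 0 with hu | hu | hu
  · -- reflection
    set g : ℝ → ℝ := fun t => -f (-t) with hg_def
    have hgc : Continuous g := (hf.comp continuous_neg).neg
    have hgmono : ∀ s t : ℝ, 0 < s → s ≤ t → g s / s ≤ g t / t := by
      intro s t hs hst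
      have h1 := hmono_neg (-t) (-s) (neg_le_neg hst) (neg_lt_zero.2 hs)
      rw [abs_neg, abs_neg, abs_of_pos hs, abs_of_pos (hs.trans_le hst)] at h1
      simp only [hg_def]
      rw [neg_div, neg_div]
      exact neg_le_neg h1
    have hnegt : Tendsto (fun t : ℝ => -t) (nhdsWithin 0 {(0:ℝ)}ᶜ) (nhdsWithin 0 {(0:ℝ)}ᶜ) := by
      rw [tendsto_nhdsWithin_iff]
      constructor
      · simpa using (continuous_neg.tendsto (0:ℝ)).mono_left nhdsWithin_le_nhds
      · filter_upwards [self_mem_nhdsWithin] with t ht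
        simpa using ht
    have hgsmall : Tendsto (fun t => g t / t) (nhdsWithin 0 {(0:ℝ)}ᶜ) (nhds 0) := by
      refine (hsmall.comp hnegt).congr ?_
      intro t
      simp only [Function.comp, hg_def]
      rw [div_neg, neg_div]
    have hgint : ∀ x : ℝ, (∫ r in (0:ℝ)..x, g r) = ∫ r in (0:ℝ)..(-x), f r := by
      intro x
      have h1 : (∫ r in (0:ℝ)..x, g r) = -∫ r in (0:ℝ)..x, f (-r) := by
        simp only [hg_def]
        exact intervalIntegral.integral_neg
      rw [h1, intervalIntegral.integral_comp_neg f, neg_zero,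
        intervalIntegral.integral_symm, neg_neg]
    have hnegc : Tendsto (Neg.neg : ℝ → ℝ) (cocompact ℝ) (cocompact ℝ) :=
      (Homeomorph.neg ℝ).isClosedEmbedding.tendsto_cocompact
    have hgsuper : Tendsto (fun t => (∫ r in (0:ℝ)..t, g r) / t ^ 2) (cocompact ℝ) atTop := by
      refine (hsuper.comp hnegc).congr ?_
      intro t
      simp only [Function.comp]
      rw [hgint t, neg_sq]
    have hgneg : ∀ t : ℝ, t ≤ 0 → g t ≤ 0 := by
      intro t ht
      simp only [hg_def, neg_nonpos]
      exact hnonneg (-t) (by linarith)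
    have hgu : g (-u) ≠ 0 := by
      simp only [hg_def, neg_neg]
      exact neg_ne_zero.2 hfu
    obtain ⟨su, tu, h1, h2, h3, h4, h5⟩ :=
      stmt_6_pos g hgc hgmono hgsmall hgsuper hgneg (-u) (neg_pos.2 hu) hgu
    refine ⟨su, tu, h1, h2, h3, ?_, ?_⟩
    · intro s v hs
      have h6 := h4 s (-v) hs
      have heq : g (-u) * ((1/2) * (s ^ 2 - 1) * (-u) + s * (-v)) + (∫ r in (0:ℝ)..(-u), g r)
          - (∫ r in (0:ℝ)..(s * (-u) + (-v)), g r)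
          = f u * ((1/2) * (s ^ 2 - 1) * u + s * v) + (∫ r in (0:ℝ)..u, f r)
          - (∫ r in (0:ℝ)..(s * u + v), f r) := by
        rw [hgint, hgint, neg_neg]
        have e1 : -(s * -u + -v) = s * u + v := by ring
        rw [e1]
        simp only [hg_def, neg_neg]
        ring
      rw [heq] at h6
      exact h6.trans (by rw [neg_eq_zero])
    · intro s hsm
      have h7 := h5 s hsm
      simp only [hg_def, mul_neg, neg_neg] at h7
      linarith
  · rw [hu, hf0] at hfu
    exact absurd rfl hfu
  · exact stmt_6_pos f hf hmono_pos hsmall hsuper hnonpos u hu hfu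
end

section
/- Let X be a Banach space, Φ : X → ℝ locally Lipschitz. The generalized directional derivative Φ°(u;v) := limsup_{h→0, t↓0} (Φ(u+h+tv) − Φ(u+h))/t satisfies: if Φ(σu) = Φ(u) for all σ > 0 near 1 and all u in a neighborhood, and Φ is Lipschitz with constant C near u, then Φ°(u; su) = 0 for every s ∈ ℝ. -/
/-!
Writing `x = u + h` and `τ = t s`, the point `u + h + t • s • u` differs from `(1 + τ) • x` only
by `τ • h`. Since `Φ` is invariant under the scaling `x ↦ (1 + τ) • x`, the Lipschitz bound gives
`|Φ (u + h + t • s • u) - Φ (u + h)| ≤ C |t s| ‖h‖`, so the difference quotients are bounded by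
`C |s| ‖h‖`, which tends to `0` as `h → 0`.
-/

open Filter

/-- Clarke's generalized directional derivative of `Φ` at `u` in the direction `v`. -/
noncomputable def clarkeDeriv {X : Type*} [NormedAddCommGroup X] [NormedSpace ℝ X]
    (Φ : X → ℝ) (u v : X) : ℝ :=
  Filter.limsup (fun p : X × ℝ => (Φ (u + p.1 + p.2 • v) - Φ (u + p.1)) / p.2)
    ((nhds (0 : X)) ×ˢ (nhdsWithin (0 : ℝ) (Set.Ioi 0)))

open Topology Metric Set

section

variable {X : Type*} [NormedAddCommGroup X] [NormedSpace ℝ X]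

theorem abs_sub_le_of_smul_invariant {Φ : X → ℝ} {C : NNReal} {S : Set X}
    (hlip : LipschitzOnWith C Φ S) {u x : X} {τ : ℝ} (hinv : Φ ((1 + τ) • x) = Φ x)
    (hmem : x + τ • u ∈ S) (hmem' : (1 + τ) • x ∈ S) :
    |Φ (x + τ • u) - Φ x| ≤ C * (|τ| * ‖x - u‖) := by
  have hdist : dist (x + τ • u) ((1 + τ) • x) = |τ| * ‖x - u‖ := by
    rw [dist_eq_norm, show x + τ • u - (1 + τ) • x = -(τ • (x - u)) by module, norm_neg,
      norm_smul, Real.norm_eq_abs]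
  rw [← hinv, ← Real.dist_eq, ← hdist]
  exact hlip.dist_le_mul _ hmem _ hmem'

theorem eventually_norm_clarke_quotient_le {Φ : X → ℝ} {u : X} {ε : ℝ} (hε : 0 < ε)
    {C : NNReal} (hlip : LipschitzOnWith C Φ (ball u ε))
    (hhom : ∀ w ∈ ball u ε, ∀ σ : ℝ, 0 < σ → |σ - 1| < ε → Φ (σ • w) = Φ w) (s : ℝ) :
    ∀ᶠ p : X × ℝ in 𝓝 0 ×ˢ 𝓝[>] 0,
      ‖(Φ (u + p.1 + p.2 • s • u) - Φ (u + p.1)) / p.2‖ ≤ C * |s| * ‖p.1‖ := by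
  have hF : 𝓝 (0 : X) ×ˢ 𝓝[>] (0 : ℝ) ≤ 𝓝 (0, 0) :=
    nhds_prod_eq (x := (0 : X)) (y := (0 : ℝ)) ▸ prod_mono le_rfl nhdsWithin_le_nhds
  have hball : ball u ε ∈ 𝓝 u := ball_mem_nhds u hε
  have hbase : ∀ᶠ p : X × ℝ in 𝓝 (0, 0), u + p.1 ∈ ball u ε :=
    (Continuous.tendsto' (by fun_prop) _ u (by simp)).eventually_mem hball
  have hscale : ∀ᶠ p : X × ℝ in 𝓝 (0, 0), 1 + p.2 * s ∈ Ioi 0 ∩ ball 1 ε :=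
    (Continuous.tendsto' (by fun_prop) _ 1 (by simp)).eventually_mem
      (inter_mem (Ioi_mem_nhds one_pos) (ball_mem_nhds 1 hε))
  have hshift : ∀ᶠ p : X × ℝ in 𝓝 (0, 0), u + p.1 + (p.2 * s) • u ∈ ball u ε :=
    (Continuous.tendsto' (by fun_prop) _ u (by simp)).eventually_mem hball
  have hscaled : ∀ᶠ p : X × ℝ in 𝓝 (0, 0), (1 + p.2 * s) • (u + p.1) ∈ ball u ε :=
    (Continuous.tendsto' (by fun_prop) _ u (by simp)).eventually_mem hball
  filter_upwards [hF (hbase.and (hscale.and (hshift.and hscaled))),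
    prod_mem_prod univ_mem self_mem_nhdsWithin] with ⟨h, t⟩ ⟨hx, ⟨hσ, hσ'⟩, hy, hσx⟩ ⟨_, ht⟩
  replace ht : 0 < t := ht
  have hinv := hhom _ hx _ hσ (by simpa [Real.dist_eq] using hσ')
  have hest := abs_sub_le_of_smul_invariant hlip hinv hy hσx
  rw [add_sub_cancel_left, abs_mul, abs_of_pos ht] at hest
  rw [Real.norm_eq_abs, abs_div, abs_of_pos ht, div_le_iff₀ ht, smul_smul]
  linarith

end

theorem stmt_12_general {X : Type*} [NormedAddCommGroup X] [NormedSpace ℝ X]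
    (Φ : X → ℝ) (u : X)
    (ε : ℝ) (hε : 0 < ε) (C : NNReal)
    (hlip : LipschitzOnWith C Φ (Metric.ball u ε))
    (hhom : ∀ w ∈ Metric.ball u ε, ∀ σ : ℝ, 0 < σ → |σ - 1| < ε → Φ (σ • w) = Φ w) :
    ∀ s : ℝ, clarkeDeriv Φ u (s • u) = 0 := by
  intro s
  have hbound : Tendsto (fun p : X × ℝ => C * |s| * ‖p.1‖) (𝓝 0 ×ˢ 𝓝[>] 0) (𝓝 0) := by
    simpa using (tendsto_norm_zero.comp tendsto_fst).const_mul ((C : ℝ) * |s|)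
  exact (squeeze_zero_norm' (eventually_norm_clarke_quotient_le hε hlip hhom s) hbound).limsup_eq

theorem stmt_12 {X : Type*} [NormedAddCommGroup X] [NormedSpace ℝ X]
    (Φ : X → ℝ) (hloclip : LocallyLipschitz Φ) (u : X) (hu : u ≠ 0)
    (ε : ℝ) (hε : 0 < ε) (C : NNReal)
    (hlip : LipschitzOnWith C Φ (Metric.ball u ε))
    (hhom : ∀ w ∈ Metric.ball u ε, ∀ σ : ℝ, 0 < σ → |σ - 1| < ε → Φ (σ • w) = Φ w) :
    ∀ s : ℝ, clarkeDeriv Φ u (s • u) = 0 :=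
  stmt_12_general Φ u ε hε C hlip hhom
end

section
/- Let f : ℝ → ℝ be continuous with f(t) = o(t) as t → 0 and t ↦ f(t)/|t| non-decreasing on (0,∞) and on (-∞,0). Then f(t)·t ≥ 0 for all t ∈ ℝ, and F(t) = ∫₀ᵗ f(s) ds ≥ 0 for all t. -/
open Filter

theorem stmt_14 (f : ℝ → ℝ) (hf : Continuous f)
    (hmono_pos : ∀ s t : ℝ, 0 < s → s ≤ t → f s / s ≤ f t / t)
    (hmono_neg : ∀ s t : ℝ, s ≤ t → t < 0 → f s / |s| ≤ f t / |t|)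
    (hsmall : Tendsto (fun t => f t / t) (nhdsWithin 0 {(0:ℝ)}ᶜ) (nhds 0)) :
    (∀ t : ℝ, 0 ≤ f t * t) ∧ (∀ t : ℝ, 0 ≤ ∫ s in (0:ℝ)..t, f s) := by
  have hpos : ∀ t : ℝ, 0 < t → 0 ≤ f t := by
    intro t ht
    have h1 : Tendsto (fun s => f s / s) (nhdsWithin 0 (Set.Ioi 0)) (nhds 0) :=
      hsmall.mono_left (nhdsWithin_mono _ (fun x hx => ne_of_gt hx))
    have h2 : ∀ᶠ s in nhdsWithin 0 (Set.Ioi 0), f s / s ≤ f t / t := by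
      filter_upwards [Ioc_mem_nhdsGT_of_mem (Set.left_mem_Ico.mpr ht)] with s hs
      exact hmono_pos s t hs.1 hs.2
    have h3 : (0:ℝ) ≤ f t / t := le_of_tendsto h1 h2
    have := mul_nonneg h3 ht.le
    rwa [div_mul_cancel₀ _ (ne_of_gt ht)] at this
  have hneg : ∀ t : ℝ, t < 0 → f t ≤ 0 := by
    intro t ht
    have h1 : Tendsto (fun s => f s / |s|) (nhdsWithin 0 (Set.Iio 0)) (nhds 0) := by
      have h0 : Tendsto (fun s => -(f s / s)) (nhdsWithin 0 (Set.Iio 0)) (nhds 0) := by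
        have := (hsmall.mono_left (nhdsWithin_mono _ (fun x hx => ne_of_lt hx))).neg
        rw [neg_zero] at this
        exact this
      refine h0.congr' ?_
      filter_upwards [self_mem_nhdsWithin] with s hs
      rw [abs_of_neg hs, div_neg]
    have h2 : ∀ᶠ s in nhdsWithin 0 (Set.Iio 0), f t / |t| ≤ f s / |s| := by
      filter_upwards [Ico_mem_nhdsLT_of_mem (Set.right_mem_Ioc.mpr ht)] with s hs
      exact hmono_neg t s hs.1 hs.2
    have h3 : f t / |t| ≤ 0 := ge_of_tendsto h1 h2
    have habs : (0:ℝ) < |t| := abs_pos.mpr (ne_of_lt ht)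
    have := mul_nonpos_of_nonpos_of_nonneg h3 habs.le
    rwa [div_mul_cancel₀ _ (ne_of_gt habs)] at this
  have hft : ∀ t : ℝ, 0 ≤ f t * t := by
    intro t
    rcases lt_trichotomy t 0 with h | h | h
    · nlinarith [hneg t h]
    · simp [h]
    · exact mul_nonneg (hpos t h) h.le
  refine ⟨hft, fun t => ?_⟩
  rcases le_or_gt 0 t with h | h
  · exact intervalIntegral.integral_nonneg h (fun s hs => by
      rcases eq_or_lt_of_le hs.1 with h0 | h0
      · have h1 : Tendsto (fun s => f s / s) (nhdsWithin 0 (Set.Ioi 0)) (nhds 0) :=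
          hsmall.mono_left (nhdsWithin_mono _ (fun x hx => ne_of_gt hx))
        -- f 0 ≥ 0 by continuity and nonneg on Ioi
        have : ∀ u > (0:ℝ), 0 ≤ f u := fun u hu => hpos u hu
        have hc : Tendsto f (nhdsWithin 0 (Set.Ioi 0)) (nhds (f 0)) :=
          (hf.tendsto 0).mono_left nhdsWithin_le_nhds
        have : 0 ≤ f 0 := ge_of_tendsto hc (by
          filter_upwards [self_mem_nhdsWithin] with u hu using hpos u hu)
        rwa [← h0]
      · exact hpos s h0)
  · rw [intervalIntegral.integral_symm]
    have hint : (∫ s in t..(0:ℝ), f s) ≤ 0 := by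
      have : (∫ s in t..(0:ℝ), f s) ≤ ∫ s in t..(0:ℝ), (0:ℝ) := by
        apply intervalIntegral.integral_mono_on h.le
          (hf.intervalIntegrable t 0) intervalIntegrable_const
        intro s hs
        rcases eq_or_lt_of_le hs.2 with h0 | h0
        · have hc : Tendsto f (nhdsWithin 0 (Set.Iio 0)) (nhds (f 0)) :=
            (hf.tendsto 0).mono_left nhdsWithin_le_nhds
          have : f 0 ≤ 0 := le_of_tendsto hc (by
            filter_upwards [self_mem_nhdsWithin] with u hu using hneg u hu)
          rwa [h0]
        · exact hneg s h0
      simpa using this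
    linarith
end
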